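/- arXiv:2508.16186 — 3 statements merged into one kernel-verified Lean document; each statement's English description precedes it below -/
import Mathlib

section
/- Let n ≥ 1 be an integer, let α₁, …, αₙ > 0 be real numbers and let τ₁, …, τₙ > 0 be pairwise distinct real numbers, and set S(t) = Σᵢ₌₁ⁿ αᵢ · h(t/τᵢ) for t ∈ ℝ. Then the set of points t > 0 at which S is not differentiable is exactly ⋃ᵢ₌₁ⁿ {τᵢ, 4τᵢ}. -/
/-!
Away from `1` and `4` the pdf `h` is given by a smooth formula. At `1` it has a corner: its
left derivative is `0` and its right derivative is `2`. At `4` the correction term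
`(4 / t²) · artanh √(1 - 4 / t)` vanishes but grows like `√(t - 4)`, so `h` has no right
derivative there, although it has one at every other point. Hence at `t = 4 τⱼ` all other terms
of the sum are right-differentiable (the `τᵢ` being distinct) and the sum is not; at `t = τᵢ`
not of the form `4 τⱼ` all other terms are differentiable, and again the sum is not.
-/

/-- The inverse hyperbolic tangent. -/
noncomputable def artanh (x : ℝ) : ℝ := (1 / 2) * Real.log ((1 + x) / (1 - x))

/-- The Hall distribution pdf. -/
noncomputable def hallPdf (t : ℝ) : ℝ :=
  if t < 1 then 0
  else if t < 4 then 2 * Real.log t / t ^ 2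
  else 2 * Real.log t / t ^ 2 - 4 / t ^ 2 * artanh (Real.sqrt (1 - 4 / t))

open Set Filter Topology

section
variable {𝕜 E F : Type*} [NontriviallyNormedField 𝕜] [NormedAddCommGroup E] [NormedSpace 𝕜 E]
  [NormedAddCommGroup F] [NormedSpace 𝕜 F] {s : Set E} {x : E}

theorem differentiableWithinAt_sum_iff_of_ne {ι : Type*} {u : Finset ι}
    {f : ι → E → F} {j : ι} (hj : j ∈ u)
    (hf : ∀ k ∈ u, k ≠ j → DifferentiableWithinAt 𝕜 (f k) s x) :
    DifferentiableWithinAt 𝕜 (fun y => ∑ k ∈ u, f k y) s x ↔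
      DifferentiableWithinAt 𝕜 (f j) s x := by
  classical
  have hrest : DifferentiableWithinAt 𝕜 (fun y => ∑ k ∈ u.erase j, f k y) s x :=
    DifferentiableWithinAt.fun_sum fun k hk => hf k (Finset.mem_of_mem_erase hk)
      (Finset.ne_of_mem_erase hk)
  have hsplit : (fun y => ∑ k ∈ u, f k y) = fun y => f j y + ∑ k ∈ u.erase j, f k y := by
    funext y; exact (Finset.add_sum_erase u (f · y) hj).symm
  rw [hsplit]
  exact ⟨fun h => by simpa using h.fun_sub hrest, fun h => h.fun_add hrest⟩

theorem differentiableWithinAt_const_mul_iff {f : E → 𝕜} {c : 𝕜} (hc : c ≠ 0) :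
    DifferentiableWithinAt 𝕜 (fun y => c * f y) s x ↔ DifferentiableWithinAt 𝕜 f s x :=
  ⟨fun h => by simpa [← mul_assoc, inv_mul_cancel₀ hc] using h.const_mul c⁻¹,
    fun h => h.const_mul c⟩

end

section
variable {𝕜 F : Type*} [NontriviallyNormedField 𝕜] [NormedAddCommGroup F] [NormedSpace 𝕜 F]
  {f : 𝕜 → F} {c x : 𝕜}

theorem differentiableWithinAt_comp_div_iff (hc : c ≠ 0) {s : Set 𝕜} :
    DifferentiableWithinAt 𝕜 (fun y => f (y / c)) ((· / c) ⁻¹' s) x ↔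
      DifferentiableWithinAt 𝕜 f s (x / c) := by
  set e := ContinuousLinearEquiv.unitsEquivAut 𝕜 (Units.mk0 c⁻¹ (inv_ne_zero hc))
  have he : ⇑e = (· / c) := funext fun y => by simp [e, div_eq_mul_inv]
  have := e.comp_right_differentiableWithinAt_iff (f := f) (s := s) (x := x)
  rwa [he] at this

theorem differentiableAt_comp_div_iff (hc : c ≠ 0) :
    DifferentiableAt 𝕜 (fun y => f (y / c)) x ↔ DifferentiableAt 𝕜 f (x / c) := by
  simpa [differentiableWithinAt_univ] using
    differentiableWithinAt_comp_div_iff (f := f) (x := x) hc (s := univ)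

end

theorem differentiableWithinAt_Ici_comp_div_iff {F : Type*} [NormedAddCommGroup F]
    [NormedSpace ℝ F] {f : ℝ → F} {c x : ℝ} (hc : 0 < c) :
    DifferentiableWithinAt ℝ (fun y => f (y / c)) (Ici x) x ↔
      DifferentiableWithinAt ℝ f (Ici (x / c)) (x / c) := by
  have : (· / c) ⁻¹' Ici (x / c) = Ici x := by
    ext y; simp [div_le_div_iff_of_pos_right hc]
  rw [← differentiableWithinAt_comp_div_iff hc.ne', this]

theorem not_differentiableWithinAt_Ici_of_add_mul_sqrt_le {f : ℝ → ℝ} {a c : ℝ} (hc : 0 < c)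
    (hf : ∀ᶠ s in 𝓝[>] a, f a + c * √(s - a) ≤ f s) :
    ¬ DifferentiableWithinAt ℝ f (Ici a) a := by
  intro hd
  have hlim := (hasDerivWithinAt_iff_tendsto_slope' (by simp : a ∉ Ioi a)).1
    (hd.mono Ioi_subset_Ici_self).hasDerivWithinAt
  have hsqrt : Tendsto (fun s => √(s - a)) (𝓝[>] a) (𝓝[>] 0) := by
    refine tendsto_nhdsWithin_of_tendsto_nhds_of_eventually_within _ ?_ ?_
    · have := ((continuous_sub_right a).sqrt.tendsto a)
      simpa using this.mono_left nhdsWithin_le_nhds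
    · filter_upwards [self_mem_nhdsWithin] with s hs
      exact Real.sqrt_pos.2 (sub_pos.2 hs)
  have hbound : Tendsto (fun s => c * (√(s - a))⁻¹) (𝓝[>] a) atTop :=
    (tendsto_inv_nhdsGT_zero.comp hsqrt).const_mul_atTop hc
  refine not_tendsto_atTop_of_tendsto_nhds hlim (tendsto_atTop_mono' _ ?_ hbound)
  filter_upwards [hf, self_mem_nhdsWithin] with s hs hsa
  have hpos : 0 < s - a := sub_pos.2 hsa
  rw [slope_def_field, le_div_iff₀ hpos]
  calc c * (√(s - a))⁻¹ * (s - a) = c * √(s - a) := by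
        rw [← Real.sqrt_div_self, mul_assoc, div_mul_cancel₀ _ hpos.ne']
    _ ≤ f s - f a := by linarith

theorem half_le_artanh {x : ℝ} (hx0 : 0 ≤ x) (hx1 : x < 1) : x / 2 ≤ artanh x := by
  have hpos : 0 < (1 + x) / (1 - x) := div_pos (by linarith) (by linarith)
  have hlog : 2 * x / (1 + x) ≤ Real.log ((1 + x) / (1 - x)) := by
    convert Real.one_sub_inv_le_log_of_pos hpos using 1
    field_simp
    ring
  have : x ≤ 2 * x / (1 + x) := by rw [le_div_iff₀ (by linarith)]; nlinarith
  unfold artanh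
  linarith

theorem differentiableAt_artanh {x : ℝ} (h0 : -1 < x) (h1 : x < 1) :
    DifferentiableAt ℝ artanh x := by
  unfold artanh
  have : 1 - x ≠ 0 := by linarith
  have : (1 + x) / (1 - x) ≠ 0 := div_ne_zero (by linarith) this
  fun_prop (disch := assumption)

noncomputable def hallCorrection (t : ℝ) : ℝ := 4 / t ^ 2 * artanh (√(1 - 4 / t))

theorem hallPdf_of_le_one {t : ℝ} (h : t ≤ 1) : hallPdf t = 0 := by
  rcases h.lt_or_eq with h | rfl
  · simp [hallPdf, h]
  · norm_num [hallPdf]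

theorem hallPdf_of_mem_Ico {t : ℝ} (h : t ∈ Ico 1 4) : hallPdf t = 2 * Real.log t / t ^ 2 := by
  simp [hallPdf, not_lt.2 h.1, h.2]

theorem hallPdf_of_four_le {t : ℝ} (h : 4 ≤ t) :
    hallPdf t = 2 * Real.log t / t ^ 2 - hallCorrection t := by
  simp [hallPdf, hallCorrection, not_lt.2 h, not_lt.2 (by linarith : 1 ≤ t)]

theorem hasDerivAt_two_mul_log_div_sq {t : ℝ} (ht : t ≠ 0) :
    HasDerivAt (fun s => 2 * Real.log s / s ^ 2) ((2 - 4 * Real.log t) / t ^ 3) t := by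
  refine (((Real.hasDerivAt_log ht).const_mul 2).fun_div (hasDerivAt_pow 2 t)
    (pow_ne_zero 2 ht)).congr_deriv ?_
  field_simp
  ring

theorem hallCorrection_four : hallCorrection 4 = 0 := by
  norm_num [hallCorrection, artanh]

theorem differentiableAt_hallCorrection {t : ℝ} (ht : 4 < t) :
    DifferentiableAt ℝ hallCorrection t := by
  have ht0 : t ≠ 0 := by positivity
  have hx0 : 0 < 1 - 4 / t := by rw [sub_pos, div_lt_one (by positivity)]; linarith
  have hx1 : √(1 - 4 / t) < 1 := by
    rw [Real.sqrt_lt' one_pos]; have : 0 < 4 / t := by positivity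
    linarith
  have hartanh := differentiableAt_artanh
    (by linarith [Real.sqrt_nonneg (1 - 4 / t)]) hx1
  have hsqrt : DifferentiableAt ℝ (fun s => √(1 - 4 / s)) t := by
    fun_prop (disch := positivity)
  have hcoeff : DifferentiableAt ℝ (fun s : ℝ => 4 / s ^ 2) t := by fun_prop (disch := positivity)
  exact hcoeff.mul (hartanh.comp (f := fun s => √(1 - 4 / s)) t hsqrt)

theorem mul_sqrt_sub_four_le_hallCorrection {s : ℝ} (hs4 : 4 < s) (hs5 : s ≤ 5) :
    2 / 75 * √(s - 4) ≤ hallCorrection s := by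
  have hs0 : 0 < s := by linarith
  have hx1 : √(1 - 4 / s) < 1 := by
    rw [Real.sqrt_lt' one_pos]; have : 0 < 4 / s := by positivity
    linarith
  have hsqrt : √(s - 4) / 3 ≤ √(1 - 4 / s) := by
    rw [show (3 : ℝ) = √(3 ^ 2) by simp, ← Real.sqrt_div' _ (by positivity)]
    refine Real.sqrt_le_sqrt ?_
    rw [div_le_iff₀ (by positivity)]
    field_simp
    nlinarith
  have hartanh : √(s - 4) / 6 ≤ artanh √(1 - 4 / s) := by
    linarith [half_le_artanh (Real.sqrt_nonneg _) hx1]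
  have hcoeff : 4 / 25 ≤ 4 / s ^ 2 := by gcongr; nlinarith
  calc 2 / 75 * √(s - 4) = 4 / 25 * (√(s - 4) / 6) := by ring
    _ ≤ 4 / s ^ 2 * artanh √(1 - 4 / s) :=
      mul_le_mul hcoeff hartanh (by positivity) (by positivity)

theorem differentiableAt_hallPdf {t : ℝ} (h1 : t ≠ 1) (h4 : t ≠ 4) :
    DifferentiableAt ℝ hallPdf t := by
  rcases lt_or_gt_of_ne h1 with ht1 | ht1
  · refine (differentiableAt_const 0).congr_of_eventuallyEq ?_
    filter_upwards [Iio_mem_nhds ht1] with s hs using hallPdf_of_le_one hs.le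
  rcases lt_or_gt_of_ne h4 with ht4 | ht4
  · refine (hasDerivAt_two_mul_log_div_sq (by positivity)).differentiableAt
      |>.congr_of_eventuallyEq ?_
    filter_upwards [Ioo_mem_nhds ht1 ht4] with s hs using hallPdf_of_mem_Ico ⟨hs.1.le, hs.2⟩
  · refine ((hasDerivAt_two_mul_log_div_sq (by positivity)).differentiableAt.sub
      (differentiableAt_hallCorrection ht4)).congr_of_eventuallyEq ?_
    filter_upwards [Ioi_mem_nhds ht4] with s hs using hallPdf_of_four_le hs.le

theorem hasDerivWithinAt_hallPdf_Iic_one : HasDerivWithinAt hallPdf 0 (Iic 1) 1 :=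
  (hasDerivWithinAt_const 1 _ 0).congr (fun _ hs => hallPdf_of_le_one hs)
    (hallPdf_of_le_one le_rfl)

theorem hasDerivWithinAt_hallPdf_Ici_one : HasDerivWithinAt hallPdf 2 (Ici 1) 1 := by
  have h : HasDerivWithinAt (fun s => 2 * Real.log s / s ^ 2) 2 (Ici 1) 1 := by
    simpa using (hasDerivAt_two_mul_log_div_sq one_ne_zero).hasDerivWithinAt
  refine h.congr_of_eventuallyEq ?_ (hallPdf_of_mem_Ico (by norm_num))
  filter_upwards [self_mem_nhdsWithin,
    nhdsWithin_le_nhds (Iio_mem_nhds (by norm_num : (1 : ℝ) < 4))]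
    with s h1 h4 using hallPdf_of_mem_Ico ⟨h1, h4⟩

theorem not_differentiableAt_hallPdf_one : ¬ DifferentiableAt ℝ hallPdf 1 := by
  intro h
  have hleft := (uniqueDiffOn_Iic (1 : ℝ) 1 self_mem_Iic).eq_deriv _
    h.hasDerivAt.hasDerivWithinAt hasDerivWithinAt_hallPdf_Iic_one
  have hright := (uniqueDiffOn_Ici (1 : ℝ) 1 self_mem_Ici).eq_deriv _
    h.hasDerivAt.hasDerivWithinAt hasDerivWithinAt_hallPdf_Ici_one
  norm_num [hleft] at hright

theorem differentiableWithinAt_hallPdf_Ici {t : ℝ} (h4 : t ≠ 4) :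
    DifferentiableWithinAt ℝ hallPdf (Ici t) t := by
  rcases eq_or_ne t 1 with rfl | h1
  · exact hasDerivWithinAt_hallPdf_Ici_one.differentiableWithinAt
  · exact (differentiableAt_hallPdf h1 h4).differentiableWithinAt

theorem not_differentiableWithinAt_hallPdf_Ici_four :
    ¬ DifferentiableWithinAt ℝ hallPdf (Ici 4) 4 := by
  intro h
  have hlog := (hasDerivAt_two_mul_log_div_sq (by norm_num : (4 : ℝ) ≠ 0)).differentiableAt
  have hcorr : DifferentiableWithinAt ℝ hallCorrection (Ici 4) 4 := by
    refine (hlog.differentiableWithinAt.sub h).congr (fun s hs => ?_) ?_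
    · simp [hallPdf_of_four_le (mem_Ici.1 hs)]
    · simp [hallPdf_of_four_le le_rfl]
  refine not_differentiableWithinAt_Ici_of_add_mul_sqrt_le (c := 2 / 75) (by norm_num) ?_ hcorr
  filter_upwards [Ioc_mem_nhdsGT (by norm_num : (4 : ℝ) < 5)] with s hs
  simpa [hallCorrection_four] using mul_sqrt_sub_four_le_hallCorrection hs.1 hs.2

noncomputable def hallSum {ι : Type*} [Fintype ι] (α τ : ι → ℝ) (t : ℝ) : ℝ :=
  ∑ i, α i * hallPdf (t / τ i)

theorem differentiableAt_mul_hallPdf_div (a : ℝ) {c t : ℝ} (hc : c ≠ 0) (h1 : t ≠ c)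
    (h4 : t ≠ 4 * c) : DifferentiableAt ℝ (fun s => a * hallPdf (s / c)) t := by
  refine DifferentiableAt.const_mul ?_ a
  rw [differentiableAt_comp_div_iff hc]
  refine differentiableAt_hallPdf ?_ ?_
  · rwa [ne_eq, div_eq_one_iff_eq hc]
  · rwa [ne_eq, div_eq_iff hc]

section
variable {ι : Type*} [Fintype ι] {α τ : ι → ℝ}

theorem differentiableAt_hallSum {t : ℝ} (hτ : ∀ i, τ i ≠ 0)
    (ht : ∀ i, t ≠ τ i ∧ t ≠ 4 * τ i) : DifferentiableAt ℝ (hallSum α τ) t :=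
  DifferentiableAt.fun_sum fun i _ =>
    differentiableAt_mul_hallPdf_div (α i) (hτ i) (ht i).1 (ht i).2

theorem not_differentiableAt_hallSum_four_mul (hτ : ∀ i, 0 < τ i) (hinj : Function.Injective τ)
    {j : ι} (hα : α j ≠ 0) : ¬ DifferentiableAt ℝ (hallSum α τ) (4 * τ j) := by
  intro h
  have hterm := (differentiableWithinAt_sum_iff_of_ne (s := Ici (4 * τ j))
    (f := fun k s => α k * hallPdf (s / τ k)) (Finset.mem_univ j) fun k _ hkj => ?_).1
    h.differentiableWithinAt
  · rw [differentiableWithinAt_const_mul_iff hα, differentiableWithinAt_Ici_comp_div_iff (hτ j),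
      mul_div_cancel_right₀ _ (hτ j).ne'] at hterm
    exact not_differentiableWithinAt_hallPdf_Ici_four hterm
  · refine DifferentiableWithinAt.const_mul ?_ (α k)
    rw [differentiableWithinAt_Ici_comp_div_iff (hτ k)]
    refine differentiableWithinAt_hallPdf_Ici fun h4 => hkj (hinj ?_)
    rw [div_eq_iff (hτ k).ne'] at h4
    linarith

theorem not_differentiableAt_hallSum_of_ne_four_mul (hτ : ∀ k, τ k ≠ 0)
    (hinj : Function.Injective τ) {i : ι} (hα : α i ≠ 0) (h4 : ∀ k, τ i ≠ 4 * τ k) :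
    ¬ DifferentiableAt ℝ (hallSum α τ) (τ i) := by
  intro h
  have hterm := (differentiableWithinAt_sum_iff_of_ne (s := univ)
    (f := fun k s => α k * hallPdf (s / τ k)) (Finset.mem_univ i) fun k _ hki => ?_).1
    h.differentiableWithinAt
  · rw [differentiableWithinAt_const_mul_iff hα, differentiableWithinAt_univ,
      differentiableAt_comp_div_iff (hτ i), div_self (hτ i)] at hterm
    exact not_differentiableAt_hallPdf_one hterm
  · exact (differentiableAt_mul_hallPdf_div (α k) (hτ k) (fun h => hki (hinj h.symm)) (h4 k))
      |>.differentiableWithinAt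
end

theorem hall_sum_nonsmooth_set_general (n : ℕ) (α τ : Fin n → ℝ)
    (hα : ∀ i, 0 < α i) (hτ : ∀ i, 0 < τ i) (hdist : Function.Injective τ) :
    {t : ℝ | 0 < t ∧
        ¬ DifferentiableAt ℝ (fun s : ℝ => ∑ i, α i * hallPdf (s / τ i)) t}
      = ⋃ i, ({τ i, 4 * τ i} : Set ℝ) := by
  ext t
  simp only [mem_ofPred_eq, mem_iUnion, mem_insert_iff, mem_singleton_iff]
  constructor
  · rintro ⟨-, hnd⟩
    by_contra! hne
    exact hnd (differentiableAt_hallSum (fun i => (hτ i).ne') hne)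
  · rintro ⟨i, rfl | rfl⟩
    · refine ⟨hτ i, ?_⟩
      by_cases h4 : ∃ j, τ i = 4 * τ j
      · obtain ⟨j, hj⟩ := h4
        rw [hj]
        exact not_differentiableAt_hallSum_four_mul hτ hdist (hα j).ne'
      · push Not at h4
        exact not_differentiableAt_hallSum_of_ne_four_mul (fun k => (hτ k).ne') hdist
          (hα i).ne' h4
    · exact ⟨by linarith [hτ i], not_differentiableAt_hallSum_four_mul hτ hdist (hα i).ne'⟩

/-- For pairwise distinct scaling parameters, the set of points of non-differentiability of a
finite positive combination of scaled Hall distributions on `(0, ∞)` is exactly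
`⋃ i, {τ i, 4 τ i}`. -/
theorem hall_sum_nonsmooth_set (n : ℕ) (hn : 1 ≤ n) (α τ : Fin n → ℝ)
    (hα : ∀ i, 0 < α i) (hτ : ∀ i, 0 < τ i) (hdist : Function.Injective τ) :
    {t : ℝ | 0 < t ∧
        ¬ DifferentiableAt ℝ (fun s : ℝ => ∑ i, α i * hallPdf (s / τ i)) t}
      = ⋃ i, ({τ i, 4 * τ i} : Set ℝ) :=
  hall_sum_nonsmooth_set_general n α τ hα hτ hdist
end

section
/- Let τ₁, τ₂ > 0 be real numbers with τ₁ ≠ τ₂. If there exists a point t₀ > 0 such that both functions t ↦ h(t/τ₁) and t ↦ h(t/τ₂) fail to be differentiable at t₀, then τ₁ = 4τ₂ or τ₂ = 4τ₁. -/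
theorem differentiableAt_artanh_s3 {x : ℝ} (h₁ : x ≠ 1) (h₂ : x ≠ -1) :
    DifferentiableAt ℝ artanh x := by
  have hden : 1 - x ≠ 0 := sub_ne_zero.mpr h₁.symm
  have hnum : 1 + x ≠ 0 := fun h ↦ h₂ (by linarith)
  unfold artanh
  fun_prop (disch := first | assumption | exact div_ne_zero hnum hden)

theorem differentiableAt_two_mul_log_div_sq {x : ℝ} (hx : x ≠ 0) :
    DifferentiableAt ℝ (fun t ↦ 2 * Real.log t / t ^ 2) x := by
  fun_prop (disch := first | assumption | exact pow_ne_zero 2 hx)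

theorem differentiableAt_artanh_sqrt_one_sub_four_div {x : ℝ} (hx₀ : x ≠ 0) (hx₄ : x ≠ 4) :
    DifferentiableAt ℝ (fun t ↦ artanh (Real.sqrt (1 - 4 / t))) x := by
  have hinner : 1 - 4 / x ≠ 0 := by
    rw [sub_ne_zero, ne_comm, ne_eq, div_eq_one_iff_eq hx₀]
    exact hx₄.symm
  have hsqrt_ne_one : Real.sqrt (1 - 4 / x) ≠ 1 := by
    rw [Ne, Real.sqrt_eq_one]
    simpa using hx₀
  have hsqrt_ne_neg_one : Real.sqrt (1 - 4 / x) ≠ -1 :=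
    ((Real.sqrt_nonneg _).trans_lt' (by norm_num)).ne'
  have hsqrt : DifferentiableAt ℝ (fun t ↦ Real.sqrt (1 - 4 / t)) x := by
    fun_prop (disch := assumption)
  exact DifferentiableAt.comp (g := artanh) x
    (differentiableAt_artanh_s3 hsqrt_ne_one hsqrt_ne_neg_one) hsqrt

theorem differentiableAt_hallPdf_s3 {x : ℝ} (h₁ : x ≠ 1) (h₄ : x ≠ 4) :
    DifferentiableAt ℝ hallPdf x := by
  rcases h₁.lt_or_gt with hx₁ | hx₁
  · refine (differentiableAt_const (0 : ℝ)).congr_of_eventuallyEq ?_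
    filter_upwards [eventually_lt_nhds hx₁] with t ht
    simp [hallPdf, ht]
  have hx₀ : x ≠ 0 := by positivity
  rcases h₄.lt_or_gt with hx₄ | hx₄
  · refine (differentiableAt_two_mul_log_div_sq hx₀).congr_of_eventuallyEq ?_
    filter_upwards [eventually_gt_nhds hx₁, eventually_lt_nhds hx₄] with t ht₁ ht₄
    simp [hallPdf, ht₁.not_gt, ht₄]
  · refine ((differentiableAt_two_mul_log_div_sq hx₀).sub
      ((by fun_prop (disch := exact pow_ne_zero 2 hx₀) :
          DifferentiableAt ℝ (fun t : ℝ ↦ 4 / t ^ 2) x).mul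
        (differentiableAt_artanh_sqrt_one_sub_four_div hx₀ h₄))).congr_of_eventuallyEq ?_
    filter_upwards [eventually_gt_nhds hx₄] with t ht
    simp [hallPdf, (show ¬ t < 1 by linarith), ht.not_gt]

theorem eq_or_eq_four_mul_of_not_differentiableAt_hallPdf_div {τ t₀ : ℝ}
    (h : ¬ DifferentiableAt ℝ (fun t ↦ hallPdf (t / τ)) t₀) : t₀ = τ ∨ t₀ = 4 * τ := by
  rcases eq_or_ne τ 0 with rfl | hτ
  · simp at h -- `t / 0 = 0`, so the function is constant
  contrapose! h
  refine (differentiableAt_hallPdf_s3 ?_ ?_).comp t₀ (differentiableAt_id.div_const τ)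
  · exact (div_eq_one_iff_eq hτ).not.mpr h.1
  · exact (div_eq_iff hτ).not.mpr h.2

theorem hall_shared_nonsmooth_point_general (τ₁ τ₂ : ℝ)
    (hne : τ₁ ≠ τ₂)
    (h : ∃ t₀ : ℝ, 0 < t₀ ∧
        ¬ DifferentiableAt ℝ (fun t : ℝ => hallPdf (t / τ₁)) t₀ ∧
        ¬ DifferentiableAt ℝ (fun t : ℝ => hallPdf (t / τ₂)) t₀) :
    τ₁ = 4 * τ₂ ∨ τ₂ = 4 * τ₁ := by
  obtain ⟨t₀, -, hnd₁, hnd₂⟩ := h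
  rcases eq_or_eq_four_mul_of_not_differentiableAt_hallPdf_div hnd₁ with h₁ | h₁ <;>
    rcases eq_or_eq_four_mul_of_not_differentiableAt_hallPdf_div hnd₂ with h₂ | h₂
  · exact absurd (h₁.symm.trans h₂) hne
  · exact .inl (h₁.symm.trans h₂)
  · exact .inr (h₂.symm.trans h₁)
  · exact absurd (by linarith) hne

/-- If two distinctly-scaled Hall distributions share a point of non-differentiability,
then one scaling parameter is four times the other. -/
theorem hall_shared_nonsmooth_point (τ₁ τ₂ : ℝ) (hτ₁ : 0 < τ₁) (hτ₂ : 0 < τ₂)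
    (hne : τ₁ ≠ τ₂)
    (h : ∃ t₀ : ℝ, 0 < t₀ ∧
        ¬ DifferentiableAt ℝ (fun t : ℝ => hallPdf (t / τ₁)) t₀ ∧
        ¬ DifferentiableAt ℝ (fun t : ℝ => hallPdf (t / τ₂)) t₀) :
    τ₁ = 4 * τ₂ ∨ τ₂ = 4 * τ₁ :=
  hall_shared_nonsmooth_point_general τ₁ τ₂ hne h
end

section
/- For every t > 0, the two-dimensional Lebesgue measure of the set A(t) := {(a,b) ∈ ℝ² : 0 < a ≤ 1, 1 − 2a ≤ b ≤ 1 − a, and b ≥ 1/(a t) − a} equals: 0 if 0 < t < 1; 1 − (1 + log t)/t if 1 ≤ t < 4; and 1 − (1 + log t)/t − (1/2)·√(1 − 4/t) + (2/t)·artanh(√(1 − 4/t)) if t ≥ 4. Moreover this measure tends to 1/2 as t → ∞. -/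
/-- The part of the triangle `{0 < a ≤ 1, 1 - 2a ≤ b ≤ 1 - a}` lying on or above the
hyperbola `b = 1/(a t) - a`. -/
def sweptRegion (t : ℝ) : Set (ℝ × ℝ) :=
  {p : ℝ × ℝ | 0 < p.1 ∧ p.1 ≤ 1 ∧ 1 - 2 * p.1 ≤ p.2 ∧ p.2 ≤ 1 - p.1 ∧
    1 / (p.1 * t) - p.1 ≤ p.2}

/-!
By Tonelli the area is `∫₀¹ ℓ a da`, where the vertical slice of `A(t)` over `a ∈ (0, 1]`
has length `ℓ a = max (min a (1 - 1/(a t))) 0`. This vanishes for `a t ≤ 1`; otherwise it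
equals `a` when `a (1 - a) t ≥ 1` and `1 - 1/(a t)` when not. Since `a (1 - a) ≤ 1/4`, the
first case occurs only for `t ≥ 4`, and then exactly between the roots
`p = (1 - s)/2 ≤ q = (1 + s)/2` of `t a² - t a + 1`, where `s = √(1 - 4/t)`. Integrating
piecewise gives the formulas. For `t ≥ 4`, `p q = 1/t` gives `artanh s = log q + log t / 2`,
so the `log t` terms cancel and the area is `1 - 1/t - s/2 + 2 log q / t`, which visibly
tends to `1/2`.
-/

open MeasureTheory Filter Set Topology
open Real hiding artanh

theorem volume_regionBetween_cc_eq_lintegral {α : Type*} [MeasurableSpace α] {μ : Measure α}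
    {f g : α → ℝ} (hf : Measurable f) (hg : Measurable g) {s : Set α} (hs : MeasurableSet s) :
    μ.prod volume {p : α × ℝ | p.1 ∈ s ∧ p.2 ∈ Icc (f p.1) (g p.1)} =
      ∫⁻ x in s, ENNReal.ofReal (g x - f x) ∂μ := by
  rw [Measure.prod_apply (measurableSet_region_between_cc hf hg hs), ← lintegral_indicator hs]
  congr 1 with x
  by_cases hx : x ∈ s
  · rw [indicator_of_mem hx, ← Real.volume_Icc]
    congr 1 with y
    simp [hx]
  · simp [hx]

noncomputable def sliceLength (t a : ℝ) : ℝ := max (min a (1 - 1 / (a * t))) 0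

section sliceLength

variable {t a x y : ℝ}

lemma sliceLength_nonneg (t a : ℝ) : 0 ≤ sliceLength t a := le_max_right _ _

lemma measurable_sliceLength (t : ℝ) : Measurable (sliceLength t) := by
  unfold sliceLength; fun_prop

lemma intervalIntegrable_sliceLength (t x y : ℝ) :
    IntervalIntegrable (sliceLength t) volume x y := by
  refine (continuous_abs.intervalIntegrable x y).mono_fun'
    (measurable_sliceLength t).aestronglyMeasurable (Eventually.of_forall fun a => ?_)
  change ‖sliceLength t a‖ ≤ |a|
  rw [Real.norm_of_nonneg (sliceLength_nonneg t a)]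
  exact max_le ((min_le_left _ _).trans (le_abs_self a)) (abs_nonneg a)

lemma sweptRegion_eq_setOf_mem_Icc (t : ℝ) : sweptRegion t =
    {p : ℝ × ℝ | p.1 ∈ Ioc 0 1 ∧
      p.2 ∈ Icc (max (1 - 2 * p.1) (1 / (p.1 * t) - p.1)) (1 - p.1)} := by
  ext p
  simp only [sweptRegion, mem_ofPred_eq, mem_Ioc, mem_Icc, max_le_iff]
  tauto

lemma one_sub_sub_max_eq_min (t a : ℝ) :
    (1 - a) - max (1 - 2 * a) (1 / (a * t) - a) = min a (1 - 1 / (a * t)) := by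
  rcases le_total (1 - 2 * a) (1 / (a * t) - a) with h | h
  · rw [max_eq_right h, min_eq_right (by linarith)]; ring
  · rw [max_eq_left h, min_eq_left (by linarith)]; ring

lemma toReal_volume_sweptRegion (t : ℝ) :
    (volume (sweptRegion t)).toReal = ∫ a in (0 : ℝ)..1, sliceLength t a := by
  have hvol : volume (sweptRegion t) = ∫⁻ a in Ioc 0 1, ENNReal.ofReal (sliceLength t a) := by
    rw [sweptRegion_eq_setOf_mem_Icc, Measure.volume_eq_prod,
      volume_regionBetween_cc_eq_lintegral (f := fun a => max (1 - 2 * a) (1 / (a * t) - a))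
        (g := fun a => 1 - a) (by fun_prop) (by fun_prop) measurableSet_Ioc]
    simp only [one_sub_sub_max_eq_min, sliceLength, ENNReal.ofReal_max, ENNReal.ofReal_zero,
      max_zero]
  rw [hvol, ← ofReal_integral_eq_lintegral_ofReal
      ((intervalIntegrable_sliceLength t 0 1).1) (Eventually.of_forall (sliceLength_nonneg t)),
    ENNReal.toReal_ofReal (integral_nonneg (sliceLength_nonneg t)),
    intervalIntegral.integral_of_le zero_le_one]

lemma sliceLength_eq_zero (ht : 0 < t) (ha : 0 ≤ a) (h : a * t ≤ 1) : sliceLength t a = 0 := by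
  rcases ha.eq_or_lt with rfl | ha
  · simp [sliceLength]
  · have : 1 ≤ 1 / (a * t) := one_le_one_div (mul_pos ha ht) h
    exact max_eq_right ((min_le_right _ _).trans (by linarith))

lemma sliceLength_eq_one_sub (h₁ : 1 ≤ a * t) (h₂ : a * (1 - a) * t ≤ 1) :
    sliceLength t a = 1 - 1 / (a * t) := by
  have hat : 0 < a * t := by linarith
  have h₀ : 1 / (a * t) ≤ 1 := (div_le_one hat).2 h₁
  have hle : 1 - a ≤ 1 / (a * t) := (le_div_iff₀ hat).2 (by linarith)
  rw [sliceLength, min_eq_right (by linarith), max_eq_left (by linarith)]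

lemma sliceLength_eq_self (ht : 0 < t) (ha : 0 ≤ a) (h : 1 ≤ a * (1 - a) * t) :
    sliceLength t a = a := by
  have hat : 0 < a * t := by
    rcases ha.eq_or_lt with rfl | ha
    · norm_num at h
    · positivity
  have hle : 1 / (a * t) ≤ 1 - a := (div_le_iff₀ hat).2 (by linarith)
  rw [sliceLength, min_eq_left (by linarith), max_eq_left ha]

lemma integral_one_sub_one_div_mul (hx : 0 < x) (hy : 0 < y) :
    ∫ a in x..y, (1 - 1 / (a * t)) = (y - x) - (log y - log x) / t := by
  have hinv : IntervalIntegrable (fun a : ℝ => a⁻¹) volume x y :=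
    intervalIntegrable_inv_iff.2 (.inr (notMem_uIcc_of_lt hx hy))
  simp_rw [one_div, mul_inv, mul_comm _ t⁻¹]
  rw [intervalIntegral.integral_sub intervalIntegrable_const (hinv.const_mul _),
    intervalIntegral.integral_const_mul, integral_inv_of_pos hx hy, log_div hy.ne' hx.ne']
  simp only [intervalIntegral.integral_const, smul_eq_mul, mul_one]
  ring

lemma integral_sliceLength_eq_zero (ht : 0 < t) (hx : 0 ≤ x) (hxy : x ≤ y) (hy : y * t ≤ 1) :
    ∫ a in x..y, sliceLength t a = 0 := by
  rw [intervalIntegral.integral_congr (g := fun _ => 0), intervalIntegral.integral_zero]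
  intro a ha
  rw [uIcc_of_le hxy] at ha
  exact sliceLength_eq_zero ht (hx.trans ha.1)
    ((mul_le_mul_of_nonneg_right ha.2 ht.le).trans hy)

lemma integral_sliceLength_eq_sub_log (ht : 0 < t) (hx : 1 ≤ x * t) (hxy : x ≤ y)
    (h : ∀ a ∈ Icc x y, a * (1 - a) * t ≤ 1) :
    ∫ a in x..y, sliceLength t a = (y - x) - (log y - log x) / t := by
  have hx₀ : 0 < x := pos_of_mul_pos_left (by linarith) ht.le
  rw [← integral_one_sub_one_div_mul hx₀ (hx₀.trans_le hxy)]
  refine intervalIntegral.integral_congr fun a ha => ?_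
  rw [uIcc_of_le hxy] at ha
  exact sliceLength_eq_one_sub (hx.trans (mul_le_mul_of_nonneg_right ha.1 ht.le)) (h a ha)

lemma integral_sliceLength_eq_sq (ht : 0 < t) (hx : 0 ≤ x) (hxy : x ≤ y)
    (h : ∀ a ∈ Icc x y, 1 ≤ a * (1 - a) * t) :
    ∫ a in x..y, sliceLength t a = (y ^ 2 - x ^ 2) / 2 := by
  rw [← integral_id]
  refine intervalIntegral.integral_congr fun a ha => ?_
  rw [uIcc_of_le hxy] at ha
  exact sliceLength_eq_self ht (hx.trans ha.1) (h a ha)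

end sliceLength

section integral

variable {t : ℝ}

lemma integral_sliceLength_of_lt_one (ht : 0 < t) (ht₁ : t < 1) :
    ∫ a in (0 : ℝ)..1, sliceLength t a = 0 :=
  integral_sliceLength_eq_zero ht le_rfl zero_le_one (by linarith)

lemma integral_sliceLength_of_one_le_of_lt_four (ht₁ : 1 ≤ t) (ht₄ : t < 4) :
    ∫ a in (0 : ℝ)..1, sliceLength t a = 1 - (1 + log t) / t := by
  have ht : 0 < t := by linarith
  have hinv : 1 / t * t = 1 := one_div_mul_cancel ht.ne'
  have hinv₁ : 1 / t ≤ 1 := (div_le_one ht).2 ht₁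
  rw [← intervalIntegral.integral_add_adjacent_intervals (b := 1 / t)
      (intervalIntegrable_sliceLength t _ _) (intervalIntegrable_sliceLength t _ _),
    integral_sliceLength_eq_zero ht le_rfl (by positivity) hinv.le,
    integral_sliceLength_eq_sub_log ht hinv.ge hinv₁
      fun a _ => by nlinarith [sq_nonneg (2 * a - 1)],
    log_one, one_div, log_inv]
  field_simp
  ring

lemma integral_sliceLength_of_roots {p q : ℝ} (hp : 0 < p) (hpq : p ≤ q) (hsum : p + q = 1)
    (hprod : p * q * t = 1) :
    ∫ a in (0 : ℝ)..1, sliceLength t a = 1 - 1 / t - (q - p) / 2 + 2 * log q / t := by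
  have hq : 0 < q := hp.trans_le hpq
  have ht : 0 < t := pos_of_mul_pos_right (hprod ▸ one_pos) (by positivity)
  have hinv : 1 / t = p * q := by field_simp; linarith
  have hpq_le_p : p * q ≤ p := by nlinarith
  have hquad (a : ℝ) : a * (1 - a) * t = 1 - t * ((a - p) * (a - q)) := by
    linear_combination (-a * t) * hsum + hprod
  have hintegrable := intervalIntegrable_sliceLength t
  have hsplit : ∫ a in (0 : ℝ)..1, sliceLength t a =
      (∫ a in (0 : ℝ)..p * q, sliceLength t a) + (∫ a in p * q..p, sliceLength t a) +
        (∫ a in p..q, sliceLength t a) + ∫ a in q..1, sliceLength t a := by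
    rw [intervalIntegral.integral_add_adjacent_intervals (hintegrable _ _) (hintegrable _ _),
      intervalIntegral.integral_add_adjacent_intervals (hintegrable _ _) (hintegrable _ _),
      intervalIntegral.integral_add_adjacent_intervals (hintegrable _ _) (hintegrable _ _)]
  have below (a : ℝ) (ha : a ∈ Icc (p * q) p) : a * (1 - a) * t ≤ 1 := by
    rw [hquad]
    nlinarith [mul_nonneg ht.le (mul_nonneg (sub_nonneg.2 ha.2) (sub_nonneg.2 (ha.2.trans hpq)))]
  have between (a : ℝ) (ha : a ∈ Icc p q) : 1 ≤ a * (1 - a) * t := by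
    rw [hquad]
    nlinarith [mul_nonneg ht.le (mul_nonneg (sub_nonneg.2 ha.1) (sub_nonneg.2 ha.2))]
  have above (a : ℝ) (ha : a ∈ Icc q 1) : a * (1 - a) * t ≤ 1 := by
    rw [hquad]
    nlinarith [mul_nonneg ht.le (mul_nonneg (sub_nonneg.2 (hpq.trans ha.1)) (sub_nonneg.2 ha.1))]
  rw [hsplit, integral_sliceLength_eq_zero ht le_rfl (by positivity) hprod.le,
    integral_sliceLength_eq_sub_log ht hprod.ge hpq_le_p below,
    integral_sliceLength_eq_sq ht hp.le hpq between,
    integral_sliceLength_eq_sub_log ht (by nlinarith) (by linarith) above,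
    log_mul hp.ne' hq.ne', log_one, ← hinv]
  field_simp
  have hsq : q ^ 2 - p ^ 2 = q - p := by rw [sq_sub_sq, add_comm, hsum, one_mul]
  linear_combination t * hsq

lemma sqrt_one_sub_four_div_lt_one (ht : 4 ≤ t) : √(1 - 4 / t) < 1 := by
  rw [sqrt_lt' one_pos]
  have : 0 < 4 / t := by positivity
  linarith

lemma mul_sqrt_one_sub_four_div_sq (ht : 4 ≤ t) : t * √(1 - 4 / t) ^ 2 = t - 4 := by
  have ht₀ : t ≠ 0 := by positivity
  rw [sq_sqrt (by rw [sub_nonneg, div_le_one (by linarith)]; exact ht)]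
  field_simp

lemma integral_sliceLength_of_four_le (ht : 4 ≤ t) :
    ∫ a in (0 : ℝ)..1, sliceLength t a =
      1 - 1 / t - √(1 - 4 / t) / 2 + 2 * log ((1 + √(1 - 4 / t)) / 2) / t := by
  set s := √(1 - 4 / t)
  have hs₁ : s < 1 := sqrt_one_sub_four_div_lt_one ht
  have hts : t * s ^ 2 = t - 4 := mul_sqrt_one_sub_four_div_sq ht
  have hprod : (1 - s) / 2 * ((1 + s) / 2) * t = 1 := by linear_combination (-1 / 4) * hts
  rw [integral_sliceLength_of_roots (by linarith) (by linarith [sqrt_nonneg (1 - 4 / t)])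
    (by ring) hprod]
  ring

lemma artanh_sqrt_one_sub_four_div (ht : 4 ≤ t) :
    artanh √(1 - 4 / t) = log ((1 + √(1 - 4 / t)) / 2) + log t / 2 := by
  set s := √(1 - 4 / t)
  have hs₁ : s < 1 := sqrt_one_sub_four_div_lt_one ht
  have hs₀ : 0 ≤ s := sqrt_nonneg _
  have hts : t * s ^ 2 = t - 4 := mul_sqrt_one_sub_four_div_sq ht
  have hquot : (1 + s) / (1 - s) = ((1 + s) / 2) ^ 2 * t := by
    rw [div_eq_iff (by linarith)]
    linear_combination ((1 + s) / 4) * hts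
  rw [artanh, hquot, log_mul (by positivity) (by linarith), log_pow]
  ring

lemma tendsto_sweptArea_closedForm :
    Tendsto (fun t : ℝ => 1 - 1 / t - √(1 - 4 / t) / 2 + 2 * log ((1 + √(1 - 4 / t)) / 2) / t)
      atTop (𝓝 (1 / 2)) := by
  have hinv : Tendsto (fun t : ℝ => 1 / t) atTop (𝓝 0) :=
    (tendsto_const_nhds (x := (1 : ℝ))).div_atTop tendsto_id
  have hsqrt : Tendsto (fun t : ℝ => √(1 - 4 / t)) atTop (𝓝 1) := by
    have h4 : Tendsto (fun t : ℝ => 1 - 4 / t) atTop (𝓝 1) := by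
      simpa using (tendsto_const_nhds (x := (1 : ℝ))).sub
        ((tendsto_const_nhds (x := (4 : ℝ))).div_atTop tendsto_id)
    simpa using h4.sqrt
  have hlog : Tendsto (fun t : ℝ => 2 * log ((1 + √(1 - 4 / t)) / 2)) atTop (𝓝 0) := by
    simpa using (((tendsto_const_nhds (x := (1 : ℝ))).add hsqrt).div_const 2).log
      (by norm_num) |>.const_mul 2
  have hlim := (((tendsto_const_nhds (x := (1 : ℝ))).sub hinv).sub (hsqrt.div_const 2)).add
    (hlog.div_atTop tendsto_id)
  simpa only [id, show (1 : ℝ) - 0 - 1 / 2 + 0 = 1 / 2 by norm_num] using hlim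

end integral

open MeasureTheory Filter in
/-- The area swept out by return-time level sets on the square-torus Poincaré section:
its value for each `t > 0`, and its limit `1/2` as `t → ∞`. -/
theorem swept_area_formula :
    (∀ t : ℝ, 0 < t → (volume (sweptRegion t)).toReal =
      if t < 1 then 0
      else if t < 4 then 1 - (1 + Real.log t) / t
      else 1 - (1 + Real.log t) / t - (1 / 2) * Real.sqrt (1 - 4 / t)
        + (2 / t) * artanh (Real.sqrt (1 - 4 / t))) ∧
    Tendsto (fun t : ℝ => (volume (sweptRegion t)).toReal) atTop (nhds (1 / 2)) := by
  refine ⟨fun t ht => ?_, tendsto_sweptArea_closedForm.congr' ?_⟩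
  · rw [toReal_volume_sweptRegion]
    split_ifs with h₁ h₄
    · exact integral_sliceLength_of_lt_one ht h₁
    · exact integral_sliceLength_of_one_le_of_lt_four (not_lt.1 h₁) h₄
    · rw [integral_sliceLength_of_four_le (not_lt.1 h₄),
        artanh_sqrt_one_sub_four_div (not_lt.1 h₄)]
      field_simp
      ring
  · filter_upwards [eventually_ge_atTop 4] with t ht
    rw [toReal_volume_sweptRegion, integral_sliceLength_of_four_le ht]
end
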